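/- Let G be a finitely generated group all of whose conjugacy classes are finite (an FC-group) and let A be a commutative unital ring. If d is a weakly inner derivation of A[G], i.e. (d ĝ)(h) = 0 for all g, h ∈ G with gh = hg, then d is inner. -/

import Mathlib

open MonoidAlgebra

/-- `d` is a derivation of the group ring `A[G]`: an `A`-linear endomorphism
satisfying the Leibniz rule. -/
def IsGroupRingDerivation {A G : Type} [CommRing A] [Group G]
    (d : MonoidAlgebra A G →ₗ[A] MonoidAlgebra A G) : Prop :=
  ∀ x y : MonoidAlgebra A G, d (x * y) = d x * y + x * d y

/-- `d` is an inner derivation of `A[G]`: `d x = a*x - x*a` for some `a ∈ A[G]`. -/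
def IsInnerDerivation {A G : Type} [CommRing A] [Group G]
    (d : MonoidAlgebra A G →ₗ[A] MonoidAlgebra A G) : Prop :=
  ∃ a : MonoidAlgebra A G, ∀ x : MonoidAlgebra A G, d x = a * x - x * a

/-- `d` is weakly inner: the coefficient of `h` in `d ĝ` vanishes whenever `g` and `h`
commute (the character of `d` is trivial on loops). -/
def IsWeaklyInnerDerivation {A G : Type} [CommRing A] [Group G]
    (d : MonoidAlgebra A G →ₗ[A] MonoidAlgebra A G) : Prop :=
  ∀ g h : G, g * h = h * g → (d (MonoidAlgebra.of A G g)).coeff h = 0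

/-!
Put `c g = d ĝ · ĝ⁻¹`. The Leibniz rule gives `c (g * h) = c g + ĝ · c h · ĝ⁻¹`, and weak
innerness says exactly that `(c u) x = 0` whenever `u` commutes with `x`. Hence `(c t) y` is the
same for all `t` conjugating a fixed representative of the class of `y` to `y`; calling it `a y`,
the cocycle identity becomes `(c g) y = a y - a (g⁻¹ y g)`, i.e. `d ĝ = a ĝ - ĝ a`. Finally every
`c g` is supported in the conjugacy classes of the supports of the `c s`, `s` in a finite
generating set; in an FC-group this is a finite set, so `a` is finitely supported.
-/

section Cocycle

variable {A G : Type} [CommRing A] [Group G]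

lemma coeff_of_mul_mul_of_inv (g : G) (p : MonoidAlgebra A G) (y : G) :
    (of A G g * p * of A G g⁻¹).coeff y = p.coeff (g⁻¹ * y * g) := by
  simp only [of_apply, coeff_mul_single_apply, coeff_single_mul_apply, one_mul, mul_one, inv_inv,
    mul_assoc]

noncomputable def derivationCocycle (d : MonoidAlgebra A G →ₗ[A] MonoidAlgebra A G) (g : G) :
    MonoidAlgebra A G :=
  d (of A G g) * of A G g⁻¹

variable {d : MonoidAlgebra A G →ₗ[A] MonoidAlgebra A G}

lemma derivationCocycle_mul_of (g : G) : derivationCocycle d g * of A G g = d (of A G g) := by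
  rw [derivationCocycle, mul_assoc, ← map_mul, inv_mul_cancel, map_one, mul_one]

lemma derivationCocycle_one (hd : IsGroupRingDerivation d) : derivationCocycle d 1 = 0 := by
  have h : d 1 = d 1 + d 1 := by simpa using hd 1 1
  rw [derivationCocycle, inv_one, map_one, left_eq_add.1 h, zero_mul]

lemma derivationCocycle_coeff_mul (hd : IsGroupRingDerivation d) (g h y : G) :
    (derivationCocycle d (g * h)).coeff y =
      (derivationCocycle d g).coeff y + (derivationCocycle d h).coeff (g⁻¹ * y * g) := by
  have hgh : derivationCocycle d (g * h) =
      derivationCocycle d g + of A G g * derivationCocycle d h * of A G g⁻¹ := by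
    rw [derivationCocycle, map_mul, hd, add_mul]
    simp only [derivationCocycle, mul_inv_rev, map_mul, mul_assoc]
    rw [← mul_assoc (of A G h), ← map_mul, mul_inv_cancel, map_one, one_mul]
  rw [hgh, coeff_add, Finsupp.add_apply, coeff_of_mul_mul_of_inv]

lemma derivationCocycle_coeff_inv (hd : IsGroupRingDerivation d) (g y : G) :
    (derivationCocycle d g⁻¹).coeff y = -(derivationCocycle d g).coeff (g * y * g⁻¹) := by
  have h := derivationCocycle_coeff_mul hd g⁻¹ g y
  rw [inv_mul_cancel, derivationCocycle_one hd, inv_inv] at h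
  simpa [eq_neg_iff_add_eq_zero] using h.symm

lemma derivationCocycle_coeff_eq_zero_of_commute (hwi : IsWeaklyInnerDerivation d) {u x : G}
    (hux : u * x = x * u) : (derivationCocycle d u).coeff x = 0 := by
  simp only [derivationCocycle, of_apply, coeff_mul_single_apply, inv_inv, mul_one]
  exact hwi u (x * u) (by rw [← mul_assoc, hux])

end Cocycle

theorem Set.Finite.conjugatesOfSet {G : Type*} [Group G] (hFC : ∀ g : G, (conjugatesOf g).Finite)
    {s : Set G} (hs : s.Finite) : (Group.conjugatesOfSet s).Finite :=
  hs.biUnion fun g _ => hFC g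

section Support

variable {A G : Type} [CommRing A] [Group G] {d : MonoidAlgebra A G →ₗ[A] MonoidAlgebra A G}

lemma support_derivationCocycle_subset_of_mem_closure (hd : IsGroupRingDerivation d)
    {S T : Set G} (hST : ∀ s ∈ S, Function.support (derivationCocycle d s).coeff ⊆ T) {g : G}
    (hg : g ∈ Subgroup.closure S) :
    Function.support (derivationCocycle d g).coeff ⊆ Group.conjugatesOfSet T := by
  have hconj {y y' : G} (hy : y ∈ Group.conjugatesOfSet T) (h : IsConj y y') :
      y' ∈ Group.conjugatesOfSet T := by
    obtain ⟨z, hz, hzy⟩ := Group.mem_conjugatesOfSet_iff.1 hy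
    exact Group.mem_conjugatesOfSet_iff.2 ⟨z, hz, hzy.trans h⟩
  induction hg using Subgroup.closure_induction with
  | mem s hs => exact (hST s hs).trans Group.subset_conjugatesOfSet
  | one => simp [derivationCocycle_one hd]
  | mul g h _ _ hg hh =>
    intro y hy
    rw [Function.mem_support, derivationCocycle_coeff_mul hd] at hy
    by_cases hgy : (derivationCocycle d g).coeff y = 0
    · rw [hgy, zero_add] at hy
      exact hconj (hh hy) (isConj_iff.2 ⟨g, by group⟩)
    · exact hg hgy
  | inv g _ hg =>
    intro y hy
    rw [Function.mem_support, derivationCocycle_coeff_inv hd, neg_ne_zero] at hy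
    exact hconj (hg hy) (isConj_iff.2 ⟨g⁻¹, by group⟩)

end Support

section ConjClassRep

variable {G : Type*} [Group G]

noncomputable def conjClassRep (y : G) : G :=
  (ConjClasses.mk y).exists_rep.choose

lemma isConj_conjClassRep (y : G) : IsConj (conjClassRep y) y :=
  ConjClasses.mk_eq_mk_iff_isConj.1 (ConjClasses.mk y).exists_rep.choose_spec

lemma conjClassRep_eq_of_isConj {y y' : G} (h : IsConj y y') :
    conjClassRep y = conjClassRep y' := by
  simp only [conjClassRep, ConjClasses.mk_eq_mk_iff_isConj.2 h]

noncomputable def conjClassConjugator (y : G) : G :=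
  (isConj_iff.1 (isConj_conjClassRep y)).choose

lemma conjClassConjugator_spec (y : G) :
    conjClassConjugator y * conjClassRep y * (conjClassConjugator y)⁻¹ = y :=
  (isConj_iff.1 (isConj_conjClassRep y)).choose_spec

end ConjClassRep

section Potential

variable {A G : Type} [CommRing A] [Group G] {d : MonoidAlgebra A G →ₗ[A] MonoidAlgebra A G}

lemma derivationCocycle_coeff_eq_of_conj (hd : IsGroupRingDerivation d)
    (hwi : IsWeaklyInnerDerivation d) {t t' x y : G} (ht : t * x * t⁻¹ = y)
    (ht' : t' * x * t'⁻¹ = y) :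
    (derivationCocycle d t).coeff y = (derivationCocycle d t').coeff y := by
  have hcomm : t⁻¹ * t' * x = x * (t⁻¹ * t') :=
    calc t⁻¹ * t' * x = t⁻¹ * (t' * x * t'⁻¹) * t' := by group
      _ = t⁻¹ * (t * x * t⁻¹) * t' := by rw [ht, ht']
      _ = x * (t⁻¹ * t') := by group
  have hx : t⁻¹ * y * t = x := by rw [← ht]; group
  rw [← mul_inv_cancel_left t t', derivationCocycle_coeff_mul hd, hx,
    derivationCocycle_coeff_eq_zero_of_commute hwi hcomm, add_zero]

variable (d) in
/-- Weak innerness makes this independent of the choice of conjugator; it will be the coefficient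
of `y` in the element `a` with `d = [a, ·]`. -/
noncomputable def derivationPotential (y : G) : A :=
  (derivationCocycle d (conjClassConjugator y)).coeff y

lemma derivationCocycle_coeff_eq_sub (hd : IsGroupRingDerivation d)
    (hwi : IsWeaklyInnerDerivation d) (g y : G) :
    (derivationCocycle d g).coeff y =
      derivationPotential d y - derivationPotential d (g⁻¹ * y * g) := by
  set s := conjClassConjugator (g⁻¹ * y * g)
  have hs : g * s * conjClassRep y * (g * s)⁻¹ = y := by
    have h : s * conjClassRep y * s⁻¹ = g⁻¹ * y * g := by
      rw [← conjClassRep_eq_of_isConj (y := g⁻¹ * y * g) (isConj_iff.2 ⟨g, by group⟩)]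
      exact conjClassConjugator_spec _
    calc g * s * conjClassRep y * (g * s)⁻¹ = g * (s * conjClassRep y * s⁻¹) * g⁻¹ := by group
      _ = y := by rw [h]; group
  rw [derivationPotential,
    derivationCocycle_coeff_eq_of_conj hd hwi (conjClassConjugator_spec y) hs,
    derivationCocycle_coeff_mul hd, derivationPotential, add_sub_cancel_right]

lemma support_derivationPotential_subset {U : Set G}
    (h : ∀ g, Function.support (derivationCocycle d g).coeff ⊆ U) :
    Function.support (derivationPotential d) ⊆ U := by
  intro y hy
  rw [Function.mem_support, derivationPotential] at hy
  exact h _ hy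

end Potential

section Inner

variable {A G : Type} [CommRing A] [Group G] {d : MonoidAlgebra A G →ₗ[A] MonoidAlgebra A G}

lemma isInnerDerivation_of_forall_of {a : MonoidAlgebra A G}
    (h : ∀ g : G, d (of A G g) = a * of A G g - of A G g * a) : IsInnerDerivation d := by
  have hd : d = LinearMap.mulLeft A a - LinearMap.mulRight A a :=
    lhom_ext' fun g => LinearMap.ext_ring (by simpa [← of_apply] using h g)
  exact ⟨a, fun x => by simp [hd]⟩

lemma isInnerDerivation_of_support_derivationCocycle_subset (hd : IsGroupRingDerivation d)
    (hwi : IsWeaklyInnerDerivation d) {U : Set G} (hU : U.Finite)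
    (hsupp : ∀ g, Function.support (derivationCocycle d g).coeff ⊆ U) :
    IsInnerDerivation d := by
  have hfin := hU.subset (support_derivationPotential_subset hsupp)
  set a : MonoidAlgebra A G := ofCoeff (Finsupp.ofSupportFinite _ hfin)
  refine isInnerDerivation_of_forall_of (a := a) fun g => ?_
  have hcoc : derivationCocycle d g = a - of A G g * a * of A G g⁻¹ := by
    ext y
    rw [coeff_sub, Finsupp.sub_apply, coeff_of_mul_mul_of_inv,
      derivationCocycle_coeff_eq_sub hd hwi]
    rfl
  rw [← derivationCocycle_mul_of, hcoc, sub_mul, mul_assoc _ (of A G g⁻¹), ← map_mul,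
    inv_mul_cancel, map_one, mul_one]

end Inner

theorem weakly_inner_is_inner_of_fc
    (A G : Type) [CommRing A] [Group G]
    (hFG : Group.FG G) (hFC : ∀ g : G, (conjugatesOf g).Finite)
    (d : MonoidAlgebra A G →ₗ[A] MonoidAlgebra A G)
    (hd : IsGroupRingDerivation d) (hwi : IsWeaklyInnerDerivation d) :
    IsInnerDerivation d := by
  obtain ⟨S, hS⟩ := hFG.out
  let T := ⋃ s ∈ S, Function.support (derivationCocycle d s).coeff
  have hT : T.Finite :=
    S.finite_toSet.biUnion fun s _ => (derivationCocycle d s).coeff.hasFiniteSupport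
  have hsupp (g : G) :
      Function.support (derivationCocycle d g).coeff ⊆ Group.conjugatesOfSet T :=
    support_derivationCocycle_subset_of_mem_closure hd (S := S)
      (fun s hs => Set.subset_biUnion_of_mem
        (u := fun s => Function.support (derivationCocycle d s).coeff) hs) (by simp [hS])
  exact isInnerDerivation_of_support_derivationCocycle_subset hd hwi
    (hT.conjugatesOfSet hFC) hsupp
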